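/- The matrix Q_1 with rows (48,208,225), (48,200,213), (48,200,208) is admissible for rock-paper-scissors: for all k ≥ 1, at time t = 1^T Q_1 (k², k, 1)^T = 144k²+608k+646 the fictitious play iterate satisfies x_t = Q_1 (k², k, 1)^T. -/
import Mathlib

open Matrix

/-- The rock-paper-scissors payoff matrix. -/
def Arps : Matrix (Fin 3) (Fin 3) ℚ := !![0,-1,1; 1,0,-1; -1,1,0]

/-- Lexicographic argmax of a 3-vector: the smallest index attaining the maximum. -/
def lexArgmax (v : Fin 3 → ℚ) : Fin 3 :=
  if v 1 ≤ v 0 ∧ v 2 ≤ v 0 then 0 else if v 2 ≤ v 1 then 1 else 2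

/-- Fictitious play iterates for RPS with lexicographic tie-breaking, x_0 = 0. -/
def rpsX : ℕ → (Fin 3 → ℚ)
  | 0 => 0
  | t+1 => rpsX t + Pi.single (lexArgmax (Arps.mulVec (rpsX t))) 1

/-- The quadratic moment vector (k², k, 1). -/
def bvec (k : ℕ) : Fin 3 → ℚ := ![(k:ℚ)^2, (k:ℚ), 1]

def Q1 : Matrix (Fin 3) (Fin 3) ℚ := !![48,208,225; 48,200,213; 48,200,208]

lemma mulVec_eval (a b c : ℚ) : Arps.mulVec ![a,b,c] = ![c-b, a-c, b-a] := by
  funext i; fin_cases i <;>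
    simp [Arps, Matrix.mulVec, dotProduct, Fin.sum_univ_three] <;> ring

lemma rpsX_succ (t : ℕ) :
    rpsX (t+1) = rpsX t + Pi.single (lexArgmax (Arps.mulVec (rpsX t))) 1 := rfl

lemma add_single0 (a b c : ℚ) : ![a,b,c] + Pi.single (0 : Fin 3) 1 = ![a+1,b,c] := by
  funext i; fin_cases i <;> simp [Pi.single_apply]

lemma add_single1 (a b c : ℚ) : ![a,b,c] + Pi.single (1 : Fin 3) 1 = ![a,b+1,c] := by
  funext i; fin_cases i <;> simp [Pi.single_apply]

lemma add_single2 (a b c : ℚ) : ![a,b,c] + Pi.single (2 : Fin 3) 1 = ![a,b,c+1] := by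
  funext i; fin_cases i <;> simp [Pi.single_apply]

lemma step0 (t : ℕ) (a b c : ℚ) (h : rpsX t = ![a,b,c])
    (h1 : a - c ≤ c - b) (h2 : b - a ≤ c - b) : rpsX (t+1) = ![a+1,b,c] := by
  rw [rpsX_succ, h, mulVec_eval]
  have : lexArgmax ![c-b, a-c, b-a] = 0 := by
    unfold lexArgmax; rw [if_pos]; exact ⟨by simpa using h1, by simpa using h2⟩
  rw [this, add_single0]

lemma step1 (t : ℕ) (a b c : ℚ) (h : rpsX t = ![a,b,c])
    (h1 : c - b < a - c) (h2 : b - a ≤ a - c) : rpsX (t+1) = ![a,b+1,c] := by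
  rw [rpsX_succ, h, mulVec_eval]
  have : lexArgmax ![c-b, a-c, b-a] = 1 := by
    unfold lexArgmax
    rw [if_neg, if_pos (by simpa using h2)]
    simp only [Matrix.cons_val_zero, Matrix.cons_val_one, Matrix.head_cons, not_and_or,
      not_le]
    left; exact h1
  rw [this, add_single1]

lemma step2 (t : ℕ) (a b c : ℚ) (h : rpsX t = ![a,b,c])
    (h1 : c - b < b - a) (h2 : a - c < b - a) : rpsX (t+1) = ![a,b,c+1] := by
  rw [rpsX_succ, h, mulVec_eval]
  have : lexArgmax ![c-b, a-c, b-a] = 2 := by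
    unfold lexArgmax
    rw [if_neg, if_neg (by simpa using not_le.2 h2)]
    simp only [Matrix.cons_val_zero, Matrix.cons_val_one, Matrix.head_cons,
      Matrix.cons_val_two, Matrix.tail_cons, not_and_or, not_le]
    right; exact h1
  rw [this, add_single2]

/-- Run of plays of index 1. -/
lemma run1 (t : ℕ) (a b c : ℚ) (J : ℕ) (h : rpsX t = ![a,b,c])
    (h0 : c - b < a - c) (h2 : b + J ≤ 2*a - c + 1) :
    rpsX (t+J) = ![a, b + J, c] := by
  induction J with
  | zero => simpa using h
  | succ J ih =>
    have hJ : b + (J:ℚ) ≤ 2*a - c + 1 := by push_cast at h2 ⊢; linarith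
    have prev := ih hJ
    have h0' : c - (b + J) < a - c := by
      have : (0:ℚ) ≤ J := Nat.cast_nonneg J
      linarith
    have h2' : (b + J) - a ≤ a - c := by push_cast at h2; linarith
    have := step1 (t+J) a (b+J) c prev h0' h2'
    rw [show t + (J+1) = (t+J) + 1 from rfl, this]
    push_cast; ring_nf

/-- Run of plays of index 2. -/
lemma run2 (t : ℕ) (a b c : ℚ) (J : ℕ) (h : rpsX t = ![a,b,c])
    (h1 : a - c < b - a) (h0 : c + J ≤ 2*b - a) :
    rpsX (t+J) = ![a, b, c + J] := by
  induction J with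
  | zero => simpa using h
  | succ J ih =>
    have hJ : c + (J:ℚ) ≤ 2*b - a := by push_cast at h0 ⊢; linarith
    have prev := ih hJ
    have h1' : (c + J) - b < b - a := by push_cast at h0; linarith
    have h2' : a - (c + J) < b - a := by
      have : (0:ℚ) ≤ J := Nat.cast_nonneg J
      linarith
    have := step2 (t+J) a b (c+J) prev h1' h2'
    rw [show t + (J+1) = (t+J) + 1 from rfl, this]
    push_cast; ring_nf

/-- Run of plays of index 0. -/
lemma run0 (t : ℕ) (a b c : ℚ) (J : ℕ) (h : rpsX t = ![a,b,c])
    (h2 : b - a ≤ c - b) (h0 : a + J ≤ 2*c - b + 1) :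
    rpsX (t+J) = ![a + J, b, c] := by
  induction J with
  | zero => simpa using h
  | succ J ih =>
    have hJ : a + (J:ℚ) ≤ 2*c - b + 1 := by push_cast at h0 ⊢; linarith
    have prev := ih hJ
    have h1' : (a + J) - c ≤ c - b := by push_cast at h0; linarith
    have h2' : b - (a + J) ≤ c - b := by
      have : (0:ℚ) ≤ J := Nat.cast_nonneg J
      linarith
    have := step0 (t+J) (a+J) b c prev h1' h2'
    rw [show t + (J+1) = (t+J) + 1 from rfl, this]
    push_cast; ring_nf

lemma vertex (n : ℕ) :
    rpsX ((3*n+1)^2) = ![3*(n:ℚ)^2+4*n+1, 3*(n:ℚ)^2, 3*(n:ℚ)^2+2*n] := by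
  induction n with
  | zero =>
    have h1 : rpsX 1 = ![1,0,0] := by
      have h0 : rpsX 0 = ![0,0,0] := by
        funext i; fin_cases i <;> simp [rpsX]
      have := step0 0 0 0 0 h0 (by norm_num) (by norm_num)
      simpa using this
    simpa using h1
  | succ n ih =>
    set nq : ℚ := (n:ℚ)
    -- run1: from (3n+1)^2, J = 6n+3 steps
    have e1 : rpsX ((3*n+2)^2) = ![3*nq^2+4*nq+1, 3*nq^2+6*nq+3, 3*nq^2+2*nq] := by
      have h := run1 ((3*n+1)^2) (3*nq^2+4*nq+1) (3*nq^2) (3*nq^2+2*nq) (6*n+3) ih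
        (by push_cast [nq]; nlinarith [sq_nonneg nq]) (by push_cast [nq]; nlinarith)
      rw [show (3*n+2)^2 = (3*n+1)^2 + (6*n+3) by ring, h]
      funext i; fin_cases i <;> push_cast [nq] <;> ring
    -- run2: J = 6n+5 steps
    have e2 : rpsX ((3*n+3)^2) = ![3*nq^2+4*nq+1, 3*nq^2+6*nq+3, 3*nq^2+8*nq+5] := by
      have h := run2 ((3*n+2)^2) (3*nq^2+4*nq+1) (3*nq^2+6*nq+3) (3*nq^2+2*nq) (6*n+5) e1
        (by push_cast [nq]; nlinarith) (by push_cast [nq]; nlinarith)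
      rw [show (3*n+3)^2 = (3*n+2)^2 + (6*n+5) by ring, h]
      funext i; fin_cases i <;> push_cast [nq] <;> ring
    -- run0: J = 6n+7 steps
    have e3 : rpsX ((3*n+4)^2) = ![3*nq^2+10*nq+8, 3*nq^2+6*nq+3, 3*nq^2+8*nq+5] := by
      have h := run0 ((3*n+3)^2) (3*nq^2+4*nq+1) (3*nq^2+6*nq+3) (3*nq^2+8*nq+5) (6*n+7) e2
        (by push_cast [nq]; nlinarith) (by push_cast [nq]; nlinarith)
      rw [show (3*n+4)^2 = (3*n+3)^2 + (6*n+7) by ring, h]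
      funext i; fin_cases i <;> push_cast [nq] <;> ring
    rw [show 3*(n+1)+1 = 3*n+4 by ring, e3]
    funext i; fin_cases i <;> push_cast [nq] <;> ring

/-- Q_1 is admissible for RPS: for all k ≥ 1, at time
t = 1ᵀ Q_1 (k²,k,1)ᵀ = 144k²+608k+646 the FP iterate satisfies x_t = Q_1 (k²,k,1)ᵀ. -/
theorem Q1_admissible (k : ℕ) (hk : 1 ≤ k) :
    ((144*k^2 + 608*k + 646 : ℚ) = ∑ i, Q1.mulVec (bvec k) i) ∧
    rpsX (144*k^2 + 608*k + 646) = Q1.mulVec (bvec k) := by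
  constructor
  · simp [Q1, bvec, Matrix.mulVec, dotProduct, Fin.sum_univ_three,
      Matrix.vecHead, Matrix.vecTail]
    push_cast; ring
  · set n : ℕ := 4*k+8 with hn
    have hv := vertex n
    have h := run1 ((3*n+1)^2) (3*(n:ℚ)^2+4*n+1) (3*(n:ℚ)^2) (3*(n:ℚ)^2+2*n) (8*k+21) hv
      (by push_cast [hn]; nlinarith [sq_nonneg ((k:ℚ))]) (by push_cast [hn]; nlinarith [sq_nonneg ((k:ℚ))])
    rw [show 144*k^2 + 608*k + 646 = (3*n+1)^2 + (8*k+21) by rw [hn]; ring, h]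
    funext i; fin_cases i <;>
      simp [Q1, bvec, Matrix.mulVec, dotProduct, Fin.sum_univ_three, hn] <;>
      push_cast <;> ring
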